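/- Let n, m ≥ 1 and let π ∈ J_{2n,2m}; set I = I_{2n+2m}. Then all the even numbers 2, 4, …, 2n lie in a single cycle of I∘π; all the even numbers 2n+2, 2n+4, …, 2n+2m lie in a single cycle of I∘π; and these two cycles are distinct, i.e., no even number of {1,…,2n} lies in the same cycle of I∘π as an even number of {2n+1,…,2n+2m}. -/

import Mathlib

noncomputable def cycleCount {N : ℕ} (π : Equiv.Perm (Fin N)) : ℕ :=
  Set.ncard {O : Set (Fin N) | ∃ x, O = {y | π.SameCycle x y}}

noncomputable def cyclesIn {N : ℕ} (π : Equiv.Perm (Fin N)) (C : Set (Fin N)) : ℕ :=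
  Set.ncard {O : Set (Fin N) | (∃ x, O = {y | π.SameCycle x y}) ∧ O ⊆ C}

/-- The annular permutation `γ_{p,q}` of `{1,…,p+q}` (0-indexed as `Fin (p+q)`),
with the two cycles `(1,…,p)` and `(p+1,…,p+q)`. -/
def annularGamma (p q : ℕ) : Equiv.Perm (Fin (p + q)) :=
  finSumFinEquiv.permCongr ((finRotate p).sumCongr (finRotate q))

/-- The interval involution `I_N = (1 2)(3 4)⋯(N-1 N)` of `{1,…,N}`
(0-indexed: swaps `2i ↔ 2i+1`), for `N` even. -/
def intervalInvolution (N : ℕ) : Equiv.Perm (Fin N) :=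
  Function.Involutive.toPerm
    (fun x => ⟨if x.val % 2 = 0 then min (x.val + 1) (N - 1) else x.val - 1, by
      rcases x with ⟨v, hv⟩
      dsimp only
      split <;> omega⟩)
    (by
      intro x
      rcases x with ⟨v, hv⟩
      apply Fin.ext
      dsimp only
      split_ifs <;> omega)

/-- The subgroup generated by `π` and `ρ` acts transitively on `Fin N`. -/
def JointTrans {N : ℕ} (π ρ : Equiv.Perm (Fin N)) : Prop :=
  ∀ x y : Fin N, ∃ g ∈ Subgroup.closure ({π, ρ} : Set (Equiv.Perm (Fin N))), g x = y

/-- `α` separates even numbers: no cycle of `α` contains two distinct even numbers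
(an element `x : Fin N` represents the number `x.val + 1`). -/
def SeparatesEven {N : ℕ} (α : Equiv.Perm (Fin N)) : Prop :=
  ∀ x y : Fin N, α.SameCycle x y → (x.val + 1) % 2 = 0 → (y.val + 1) % 2 = 0 → x = y

/-- `π ∈ S_NC(p,q)`: annular non-crossing permutations. -/
def AnnularNC (p q : ℕ) (π : Equiv.Perm (Fin (p + q))) : Prop :=
  JointTrans π (annularGamma p q) ∧
    cycleCount π + cycleCount (π⁻¹ * annularGamma p q) = p + q

/-- `A` witnesses bipartiteness of the graph `G_π`: `π(A) = A` and for each `i`,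
exactly one of the (1-indexed) numbers `2i-1`, `2i` belongs to `A`. -/
def BipartSet {N : ℕ} (π : Equiv.Perm (Fin N)) (A : Set (Fin N)) : Prop :=
  (⇑π) '' A = A ∧ ∀ i : ℕ, ∀ h : 2 * i + 1 < N,
    Xor' ((⟨2 * i, Nat.lt_of_succ_lt h⟩ : Fin N) ∈ A) ((⟨2 * i + 1, h⟩ : Fin N) ∈ A)

/-- The graph `G_π` is bipartite. -/
def GraphBipartite {N : ℕ} (π : Equiv.Perm (Fin N)) : Prop :=
  ∃ A : Set (Fin N), BipartSet π A

/-- `π ∈ J_{2n,2m}`: annular non-crossing, bipartite graph, and `π⁻¹γ` separates even. -/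
def memJ (n m : ℕ) (π : Equiv.Perm (Fin (2 * n + 2 * m))) : Prop :=
  AnnularNC (2 * n) (2 * m) π ∧ GraphBipartite π ∧
    SeparatesEven (π⁻¹ * annularGamma (2 * n) (2 * m))

/-! Write `τ = I π`, `β = I γ` and `α = π⁻¹ γ`, so that `τ = β α⁻¹`. The permutation `β` fixes
every odd number and rotates the even numbers of each circle cyclically by `2i ↦ 2i + 2`. Since `α` separates
even numbers, the `α`-cycle of an even number `x` contains no other even number; so starting from
`x`, the permutation `τ` runs backwards through this `α`-cycle, where `β` is the identity, and
leaves `α x` for `β x`. Conversely, the union of the `α`-cycles through the even numbers of one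
`β`-cycle is `τ`-invariant. Hence on even numbers the cycles of `τ` are those of `β`. -/

lemma val_finRotate : ∀ (k : ℕ) (i : Fin k),
    (finRotate k i).val = if i.val + 1 < k then i.val + 1 else 0
  | k + 1, i => by
    rw [coe_finRotate]
    split_ifs <;> simp_all [Fin.ext_iff]; omega

lemma val_annularGamma (p q : ℕ) (x : Fin (p + q)) :
    (annularGamma p q x).val =
      if x.val < p then (if x.val + 1 < p then x.val + 1 else 0)
      else (if x.val + 1 < p + q then x.val + 1 else p) := by
  induction x using Fin.addCases with
  | left i =>
    simp only [annularGamma, Equiv.permCongr_apply, finSumFinEquiv_symm_apply_castAdd,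
      Equiv.Perm.sumCongr_apply, Sum.map_inl, finSumFinEquiv_apply_left, Fin.val_castAdd,
      val_finRotate, if_pos i.isLt]
  | right j =>
    simp only [annularGamma, Equiv.permCongr_apply, finSumFinEquiv_symm_apply_natAdd,
      Equiv.Perm.sumCongr_apply, Sum.map_inr, finSumFinEquiv_apply_right, Fin.val_natAdd,
      val_finRotate]
    split_ifs <;> omega

lemma val_intervalInvolution (N : ℕ) (x : Fin N) :
    (intervalInvolution N x).val =
      if x.val % 2 = 0 then min (x.val + 1) (N - 1) else x.val - 1 :=
  rfl

lemma val_intervalInvolution_mul_annularGamma (n m : ℕ) (x : Fin (2 * n + 2 * m)) :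
    ((intervalInvolution (2 * n + 2 * m) * annularGamma (2 * n) (2 * m)) x).val =
      if x.val % 2 = 0 then x.val
      else if x.val + 2 < 2 * n then x.val + 2
      else if x.val < 2 * n then 1
      else if x.val + 2 < 2 * n + 2 * m then x.val + 2
      else 2 * n + 1 := by
  have := x.isLt
  rw [Equiv.Perm.mul_apply, val_intervalInvolution, val_annularGamma]
  split_ifs <;> omega

namespace Equiv.Perm

variable {X : Type*} {f α β : Perm X} {s : Set X} {x y : X}

theorem mapsTo_of_forall_notMem_apply_eq_self (hfix : ∀ z ∉ s, β z = z) :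
    Set.MapsTo β s s := by
  intro z hz
  by_contra hβz
  have : β (β z) = β z := hfix _ hβz
  rw [β.injective this] at hβz
  exact hβz hz

theorem sameCycle_of_apply_val_eq_add_two {N lo hi : ℕ} {f : Perm (Fin N)}
    (hf : ∀ z : Fin N, z.val % 2 = 1 → lo ≤ z.val → z.val + 2 < hi → (f z).val = z.val + 2)
    {x y : Fin N} (hx : x.val % 2 = 1) (hy : y.val % 2 = 1) (hxlo : lo ≤ x.val)
    (hylo : lo ≤ y.val) (hxhi : x.val < hi) (hyhi : y.val < hi) : f.SameCycle x y := by
  wlog hxy : x.val ≤ y.val generalizing x y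
  · exact (this hy hx hylo hxlo hyhi hxhi (by omega)).symm
  obtain ⟨k, hk⟩ : ∃ k, y.val = x.val + 2 * k := ⟨(y.val - x.val) / 2, by omega⟩
  induction k generalizing y with
  | zero => rw [Fin.ext (hk.trans x.val.add_zero)]
  | succ k ih =>
    let z : Fin N := ⟨x.val + 2 * k, by omega⟩
    have hz : z.val = x.val + 2 * k := rfl
    have hzy : f z = y := Fin.ext (by rw [hf z (by omega) (by omega) (by omega)]; omega)
    rw [← hzy]
    exact sameCycle_apply_right.mpr (ih (by omega) (by omega) (by omega) (by omega) hz)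

variable [Finite X]

theorem SameCycle.mem_of_mapsTo (h : f.SameCycle x y) (hs : Set.MapsTo f s s) (hx : x ∈ s) :
    y ∈ s := by
  obtain ⟨i, -, rfl⟩ := h.exists_pow_eq'
  rw [coe_pow]
  exact hs.iterate i hx

section Marked

variable (hfix : ∀ z ∉ s, β z = z) (hsep : ∀ x ∈ s, ∀ y ∈ s, α.SameCycle x y → x = y)
include hfix hsep

theorem sameCycle_mul_inv_apply (hx : x ∈ s) : (β * α⁻¹).SameCycle x (β x) := by
  -- The whole `α`-cycle of `x` lies in the `β α⁻¹`-cycle of `x`, and `(β α⁻¹) (α x) = β x`.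
  have hmaps : Set.MapsTo ⇑α⁻¹ {z | α.SameCycle x z ∧ (β * α⁻¹).SameCycle x z}
      {z | α.SameCycle x z ∧ (β * α⁻¹).SameCycle x z} := by
    rintro z ⟨hαz, hτz⟩
    have hαz' : α.SameCycle x (α⁻¹ z) := sameCycle_symm_apply_right.mpr hαz
    by_cases hz : α⁻¹ z ∈ s
    · rw [← hsep x hx _ hz hαz']
      exact ⟨.rfl, .rfl⟩
    · have : (β * α⁻¹) z = α⁻¹ z := hfix _ hz
      exact ⟨hαz', this ▸ sameCycle_apply_right.mpr hτz⟩
  have hαx : α⁻¹.SameCycle x (α x) := sameCycle_inv.mpr (sameCycle_apply_right.mpr .rfl)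
  have hτ : (β * α⁻¹).SameCycle x (α x) := (hαx.mem_of_mapsTo hmaps ⟨.rfl, .rfl⟩).2
  simpa using sameCycle_apply_right.mpr hτ

theorem sameCycle_mul_inv_iff (hx : x ∈ s) (hy : y ∈ s) :
    (β * α⁻¹).SameCycle x y ↔ β.SameCycle x y := by
  have hβs := mapsTo_of_forall_notMem_apply_eq_self hfix
  constructor
  · intro h
    have hmaps : Set.MapsTo (β * α⁻¹) {z | ∃ o ∈ s, β.SameCycle x o ∧ α.SameCycle o z}
        {z | ∃ o ∈ s, β.SameCycle x o ∧ α.SameCycle o z} := by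
      rintro z ⟨o, ho, hxo, hoz⟩
      have hoz' : α.SameCycle o (α⁻¹ z) := sameCycle_symm_apply_right.mpr hoz
      by_cases hz : α⁻¹ z ∈ s
      · refine ⟨β o, hβs ho, hxo.trans (sameCycle_apply_right.mpr .rfl), ?_⟩
        rw [mul_apply, ← hsep o ho _ hz hoz']
      · exact ⟨o, ho, hxo, (hfix _ hz).symm ▸ hoz'⟩
    obtain ⟨o, ho, hxo, hoy⟩ := h.mem_of_mapsTo hmaps ⟨x, hx, .rfl, .rfl⟩
    rwa [hsep o ho y hy hoy] at hxo
  · intro h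
    have hmaps : Set.MapsTo β {z | z ∈ s ∧ (β * α⁻¹).SameCycle x z}
        {z | z ∈ s ∧ (β * α⁻¹).SameCycle x z} := fun z ⟨hz, hxz⟩ =>
      ⟨hβs hz, hxz.trans (sameCycle_mul_inv_apply hfix hsep hz)⟩
    exact (h.mem_of_mapsTo hmaps ⟨hx, .rfl⟩).2

end Marked

end Equiv.Perm

theorem stmt_8_general (n m : ℕ)
    (π : Equiv.Perm (Fin (2 * n + 2 * m))) (hπ : memJ n m π) :
    (∀ x y : Fin (2 * n + 2 * m),
      (x.val + 1) % 2 = 0 → (y.val + 1) % 2 = 0 →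
      x.val < 2 * n → y.val < 2 * n →
      (intervalInvolution (2 * n + 2 * m) * π).SameCycle x y) ∧
    (∀ x y : Fin (2 * n + 2 * m),
      (x.val + 1) % 2 = 0 → (y.val + 1) % 2 = 0 →
      2 * n ≤ x.val → 2 * n ≤ y.val →
      (intervalInvolution (2 * n + 2 * m) * π).SameCycle x y) ∧
    (∀ x y : Fin (2 * n + 2 * m),
      (x.val + 1) % 2 = 0 → (y.val + 1) % 2 = 0 →
      x.val < 2 * n → 2 * n ≤ y.val →
      ¬ (intervalInvolution (2 * n + 2 * m) * π).SameCycle x y) := by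
  obtain ⟨-, -, hsep⟩ := hπ
  have hβ := val_intervalInvolution_mul_annularGamma n m
  set γ := annularGamma (2 * n) (2 * m)
  set β := intervalInvolution (2 * n + 2 * m) * γ
  have hτ : intervalInvolution (2 * n + 2 * m) * π = β * (π⁻¹ * γ)⁻¹ := by
    simp only [β, mul_inv_rev, inv_inv, mul_assoc, mul_inv_cancel_left]
  have hfix : ∀ z ∉ {z : Fin (2 * n + 2 * m) | (z.val + 1) % 2 = 0}, β z = z := fun z hz =>
    Fin.ext (by rw [hβ, if_pos (by simp at hz; omega)])
  have hcycle : ∀ x y : Fin (2 * n + 2 * m), (x.val + 1) % 2 = 0 → (y.val + 1) % 2 = 0 →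
      ((intervalInvolution (2 * n + 2 * m) * π).SameCycle x y ↔ β.SameCycle x y) :=
    fun x y hx hy => hτ ▸ Equiv.Perm.sameCycle_mul_inv_iff hfix
      (fun x hx y hy h => hsep x y h hx hy) hx hy
  refine ⟨fun x y hx hy hxn hyn => (hcycle x y hx hy).2 ?_,
    fun x y hx hy hxn hyn => (hcycle x y hx hy).2 ?_,
    fun x y hx hy hxn hyn h => ?_⟩
  · exact Equiv.Perm.sameCycle_of_apply_val_eq_add_two (lo := 0) (hi := 2 * n)
      (fun z _ _ _ => by rw [hβ]; split_ifs <;> omega) (by omega) (by omega) x.val.zero_le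
      y.val.zero_le hxn hyn
  · exact Equiv.Perm.sameCycle_of_apply_val_eq_add_two (lo := 2 * n) (hi := 2 * n + 2 * m)
      (fun z _ _ _ => by rw [hβ]; split_ifs <;> omega) (by omega) (by omega) hxn hyn x.isLt y.isLt
  · have hmaps : Set.MapsTo β {z | z.val < 2 * n} {z | z.val < 2 * n} := fun z hz => by
      simp only [Set.mem_ofPred_eq, hβ] at hz ⊢
      split_ifs <;> omega
    exact absurd (((hcycle x y hx hy).1 h).mem_of_mapsTo hmaps hxn) (not_lt.2 hyn)

theorem stmt_8 (n m : ℕ) (hn : 1 ≤ n) (hm : 1 ≤ m)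
    (π : Equiv.Perm (Fin (2 * n + 2 * m))) (hπ : memJ n m π) :
    (∀ x y : Fin (2 * n + 2 * m),
      (x.val + 1) % 2 = 0 → (y.val + 1) % 2 = 0 →
      x.val < 2 * n → y.val < 2 * n →
      (intervalInvolution (2 * n + 2 * m) * π).SameCycle x y) ∧
    (∀ x y : Fin (2 * n + 2 * m),
      (x.val + 1) % 2 = 0 → (y.val + 1) % 2 = 0 →
      2 * n ≤ x.val → 2 * n ≤ y.val →
      (intervalInvolution (2 * n + 2 * m) * π).SameCycle x y) ∧
    (∀ x y : Fin (2 * n + 2 * m),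
      (x.val + 1) % 2 = 0 → (y.val + 1) % 2 = 0 →
      x.val < 2 * n → 2 * n ≤ y.val →
      ¬ (intervalInvolution (2 * n + 2 * m) * π).SameCycle x y) :=
  stmt_8_general n m π hπ
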